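/- arXiv:1401.4658 — 7 statements merged into one kernel-verified Lean document; each statement's English description precedes it below -/
import Mathlib

section
/- Let M = (S, P, I) be a possibilistic Kripke structure (P : S × S → [0,1] with ⨆_{s'} P(s,s') = 1 for all s, and I : S → [0,1] with ⨆_s I(s) = 1), and define Po(π) = I(π 0) ⊓ ⨅_{i} P(π i, π (i+1)) for an infinite path π, and Po(E) = ⨆_{π ∈ E} Po(π). Then for any finite sequence s₀ … sₙ with n > 0, Po(Cyl(s₀…sₙ)) = I(s₀) ⊓ ⨅_{i=0}^{n-1} P(sᵢ, sᵢ₊₁), where Cyl(s₀…sₙ) is the set of infinite paths π with π i = sᵢ for 0 ≤ i ≤ n and P(π i, π (i+1)) > 0 for all i, assuming S is finite and I(s₀) ⊓ ⨅_{i=0}^{n-1} P(sᵢ,sᵢ₊₁) > 0. -/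
open scoped ENNReal

/-- in a finite possibilistic Kripke structure, the possibility measure of
the cylinder set of a finite path fragment `s 0, …, s n` (with `n > 0`) equals
`I (s 0) ⊓ ⨅_{i<n} P (s i) (s (i+1))`, assuming this value is positive. -/
theorem stmt1 {S : Type*} [Fintype S] (P : S → S → ℝ≥0∞) (I : S → ℝ≥0∞)
    (hP1 : ∀ s t, P s t ≤ 1) (hPn : ∀ s, (⨆ t, P s t) = 1)
    (hI1 : ∀ s, I s ≤ 1) (hIn : (⨆ s, I s) = 1)
    (n : ℕ) (hn : 0 < n) (s : ℕ → S)
    (hpos : 0 < I (s 0) ⊓ ⨅ i ∈ Finset.range n, P (s i) (s (i + 1))) :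
    (⨆ π ∈ {π : ℕ → S | (∀ i ≤ n, π i = s i) ∧ ∀ i, 0 < P (π i) (π (i + 1))},
        I (π 0) ⊓ ⨅ i, P (π i) (π (i + 1))) =
      I (s 0) ⊓ ⨅ i ∈ Finset.range n, P (s i) (s (i + 1)) := by
  have hS : Nonempty S := by
    by_contra h
    rw [not_nonempty_iff] at h
    simp [iSup_of_empty] at hIn
  -- every state has a successor with possibility 1
  have hf : ∀ u : S, ∃ t, P u t = 1 := by
    intro u
    obtain ⟨t, -, ht⟩ := Finset.exists_max_image Finset.univ (P u)
      ⟨Classical.arbitrary S, Finset.mem_univ _⟩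
    refine ⟨t, le_antisymm (hP1 _ _) ?_⟩
    rw [← hPn u]
    exact iSup_le fun a => ht a (Finset.mem_univ a)
  choose f hfP using hf
  -- each finite-prefix transition is positive
  have hposI : ∀ i < n, 0 < P (s i) (s (i + 1)) := by
    intro i hi
    refine lt_of_lt_of_le (lt_of_lt_of_le hpos inf_le_right) ?_
    exact iInf₂_le i (Finset.mem_range.mpr hi)
  -- the greedy extension path
  set π : ℕ → S := fun k =>
    Nat.rec (s 0) (fun k ih => if k + 1 ≤ n then s (k + 1) else f ih) k with hπdef
  have hπ0 : π 0 = s 0 := rfl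
  have hπsucc : ∀ k, π (k + 1) = if k + 1 ≤ n then s (k + 1) else f (π k) := fun k => rfl
  have hπle : ∀ i ≤ n, π i = s i := by
    intro i hi
    cases i with
    | zero => rfl
    | succ k => rw [hπsucc, if_pos hi]
  have hπgt : ∀ k, n ≤ k → π (k + 1) = f (π k) := by
    intro k hk
    rw [hπsucc, if_neg (by omega)]
  have hπmem : π ∈ {π : ℕ → S | (∀ i ≤ n, π i = s i) ∧ ∀ i, 0 < P (π i) (π (i + 1))} := by
    refine ⟨hπle, fun i => ?_⟩
    rcases lt_or_ge i n with hi | hi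
    · rw [hπle i hi.le, hπle (i + 1) hi]
      exact hposI i hi
    · rw [hπgt i hi, hfP]
      exact zero_lt_one
  have hπinf : (⨅ i, P (π i) (π (i + 1))) = ⨅ i ∈ Finset.range n, P (s i) (s (i + 1)) := by
    apply le_antisymm
    · refine le_iInf₂ fun i hi => ?_
      rw [Finset.mem_range] at hi
      refine iInf_le_of_le i ?_
      rw [hπle i hi.le, hπle (i + 1) hi]
    · refine le_iInf fun i => ?_
      rcases lt_or_ge i n with hi | hi
      · rw [hπle i hi.le, hπle (i + 1) hi]
        exact iInf₂_le i (Finset.mem_range.mpr hi)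
      · rw [hπgt i hi, hfP]
        refine le_trans (iInf₂_le 0 (Finset.mem_range.mpr hn)) (hP1 _ _)
  apply le_antisymm
  · refine iSup₂_le fun ρ hρ => ?_
    obtain ⟨hρle, -⟩ := hρ
    refine inf_le_inf ?_ ?_
    · rw [hρle 0 (Nat.zero_le _)]
    · refine le_iInf₂ fun i hi => ?_
      rw [Finset.mem_range] at hi
      refine iInf_le_of_le i ?_
      rw [hρle i hi.le, hρle (i + 1) hi]
  · refine le_iSup₂_of_le π hπmem ?_
    rw [hπ0, hπinf]
end

section
/- Let M be a finite possibilistic Kripke structure with all transition values of paths positive. For any state s and any set of paths φ, there exists a path π ∈ Paths(s) with π ⊨ φ if and only if Po(s ⊨ φ) > 0. (That is, the CTL formula ∃φ is equivalent to the PoCTL formula Po_{>0}(φ).) -/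
open scoped ENNReal

/-- the set of paths of a possibilistic Kripke structure starting at `s`:
infinite sequences whose consecutive transition possibilities are all positive. -/
def PathsFrom {S : Type*} (P : S → S → ℝ≥0∞) (s : S) : Set (ℕ → S) :=
  {π | π 0 = s ∧ ∀ i, 0 < P (π i) (π (i + 1))}

/-- the possibility `Po(s ⊨ φ)` of the set of paths from `s` satisfying `φ`. -/
noncomputable def PoSat {S : Type*} (P : S → S → ℝ≥0∞) (s : S) (φ : Set (ℕ → S)) : ℝ≥0∞ :=
  ⨆ π ∈ PathsFrom P s ∩ φ, ⨅ i, P (π i) (π (i + 1))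

/-!
Only the finitely many values of `P` occur along a path, so the infimum of its transition
possibilities is attained, hence positive.
-/

theorem ciInf_mem_range_of_finite_range {α ι : Type*} [ConditionallyCompleteLinearOrder α]
    [Nonempty ι] {f : ι → α} (hf : (Set.range f).Finite) : ⨅ i, f i ∈ Set.range f :=
  (Set.range_nonempty f).csInf_mem hf

theorem lt_ciInf_of_finite_range {α ι : Type*} [ConditionallyCompleteLinearOrder α]
    [Nonempty ι] {f : ι → α} {a : α} (hf : (Set.range f).Finite) (h : ∀ i, a < f i) :
    a < ⨅ i, f i := by
  obtain ⟨i, hi⟩ := ciInf_mem_range_of_finite_range hf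
  exact hi ▸ h i

theorem PathsFrom.iInf_transition_pos {S : Type*} [Finite S] {P : S → S → ℝ≥0∞} {s : S}
    {π : ℕ → S} (hπ : π ∈ PathsFrom P s) : 0 < ⨅ i, P (π i) (π (i + 1)) :=
  lt_ciInf_of_finite_range
    ((Set.finite_range (Function.uncurry P)).subset
      (Set.range_subset_iff.2 fun i => ⟨(π i, π (i + 1)), rfl⟩))
    hπ.2

theorem stmt5_general {S : Type*} [Fintype S] (P : S → S → ℝ≥0∞)
    (s : S) (φ : Set (ℕ → S)) :
    (∃ π ∈ PathsFrom P s, π ∈ φ) ↔ 0 < PoSat P s φ := by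
  rw [PoSat, lt_biSup_iff]
  exact ⟨fun ⟨π, hπ, hφ⟩ => ⟨π, ⟨hπ, hφ⟩, PathsFrom.iInf_transition_pos hπ⟩,
    fun ⟨π, ⟨hπ, hφ⟩, _⟩ => ⟨π, hπ, hφ⟩⟩

/-- in a finite possibilistic Kripke structure, for every state `s` and
path event `φ`: some path from `s` satisfies `φ` iff `Po(s ⊨ φ) > 0`,
i.e. `∃φ ≡ Po_{>0}(φ)`. -/
theorem stmt5 {S : Type*} [Fintype S] (P : S → S → ℝ≥0∞)
    (hP1 : ∀ s t, P s t ≤ 1) (hPn : ∀ s, (⨆ t, P s t) = 1)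
    (s : S) (φ : Set (ℕ → S)) :
    (∃ π ∈ PathsFrom P s, π ∈ φ) ↔ 0 < PoSat P s φ :=
  stmt5_general P s φ
end

section
/- For a finite possibilistic Kripke structure M with state s and atomic proposition a: Po(s ⊨ ◇□a) = 1 if and only if s ⊨ Po_{=1}(◇ Po_{=1}(□a)), i.e., the possibility of the set of paths from s that eventually reach a state t with Po(t ⊨ □a) = 1 equals 1. -/
open scoped ENNReal

lemma poSat_le_one {S : Type*} (P : S → S → ℝ≥0∞) (hP1 : ∀ s t, P s t ≤ 1)
    (s : S) (φ : Set (ℕ → S)) : PoSat P s φ ≤ 1 := by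
  refine iSup_le fun π => iSup_le fun _ => ?_
  exact le_trans (iInf_le _ 0) (hP1 _ _)

lemma poSat_eq_one_iff {S : Type*} [Fintype S] (P : S → S → ℝ≥0∞)
    (hP1 : ∀ s t, P s t ≤ 1) (s : S) (φ : Set (ℕ → S)) :
    PoSat P s φ = 1 ↔ ∃ π ∈ PathsFrom P s ∩ φ, ∀ i, P (π i) (π (i + 1)) = 1 := by
  constructor
  · intro h
    set v : (ℕ → S) → ℝ≥0∞ := fun π => ⨅ i, P (π i) (π (i + 1)) with hv
    have hPo : sSup (v '' (PathsFrom P s ∩ φ)) = 1 := by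
      rw [sSup_image]; exact h
    have hVfin : (Set.range (fun p : S × S => P p.1 p.2)).Finite := Set.finite_range _
    have hTsub : v '' (PathsFrom P s ∩ φ) ⊆ Set.range (fun p : S × S => P p.1 p.2) := by
      rintro x ⟨π, -, rfl⟩
      have hrsub : Set.range (fun i => P (π i) (π (i + 1))) ⊆
          Set.range (fun p : S × S => P p.1 p.2) := by
        rintro y ⟨i, rfl⟩; exact ⟨(π i, π (i + 1)), rfl⟩
      have hrfin : (Set.range (fun i => P (π i) (π (i + 1)))).Finite :=
        hVfin.subset hrsub
      have hmem : sInf (Set.range (fun i => P (π i) (π (i + 1)))) ∈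
          Set.range (fun i => P (π i) (π (i + 1))) :=
        Set.Nonempty.csInf_mem (Set.range_nonempty _) hrfin
      obtain ⟨i, hi⟩ := hmem
      have : v π = P (π i) (π (i + 1)) := by
        rw [hv]; simp only [iInf, hi.symm]
      rw [this]; exact ⟨(π i, π (i + 1)), rfl⟩
    have hTfin : (v '' (PathsFrom P s ∩ φ)).Finite := hVfin.subset hTsub
    have hTne : (v '' (PathsFrom P s ∩ φ)).Nonempty := by
      by_contra hne
      rw [Set.not_nonempty_iff_eq_empty] at hne
      rw [hne, sSup_empty] at hPo
      simp at hPo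
    have hmem : sSup (v '' (PathsFrom P s ∩ φ)) ∈ v '' (PathsFrom P s ∩ φ) :=
      Set.Nonempty.csSup_mem hTne hTfin
    rw [hPo] at hmem
    obtain ⟨π, hπ, hvπ⟩ := hmem
    refine ⟨π, hπ, fun i => le_antisymm (hP1 _ _) ?_⟩
    calc (1 : ℝ≥0∞) = v π := hvπ.symm
    _ ≤ P (π i) (π (i + 1)) := iInf_le _ i
  · rintro ⟨π, hπ, h1⟩
    refine le_antisymm (poSat_le_one P hP1 s φ) ?_
    have : (1 : ℝ≥0∞) = ⨅ i, P (π i) (π (i + 1)) := by simp [h1]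
    rw [this]
    exact le_iSup₂_of_le π hπ le_rfl

/-- in a finite possibilistic Kripke structure, for a state `s` and set `A`
of `a`-states: `s ⊨ Po_{=1}(◇ Po_{=1}(□a))` iff `Po(s ⊨ ◇□a) = 1`. -/
theorem stmt8 {S : Type*} [Fintype S] (P : S → S → ℝ≥0∞)
    (hP1 : ∀ s t, P s t ≤ 1) (hPn : ∀ s, (⨆ t, P s t) = 1)
    (s : S) (A : Set S) :
    PoSat P s {π | ∃ j, PoSat P (π j) {π' | ∀ k, π' k ∈ A} = 1} = 1 ↔
      PoSat P s {π | ∃ j, ∀ k, j ≤ k → π k ∈ A} = 1 := by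
  rw [poSat_eq_one_iff P hP1, poSat_eq_one_iff P hP1]
  constructor
  · rintro ⟨π, ⟨⟨h0, hpos⟩, j, hj⟩, hedge⟩
    rw [poSat_eq_one_iff P hP1] at hj
    obtain ⟨π', ⟨⟨h0', -⟩, hA⟩, hedge'⟩ := hj
    refine ⟨fun k => if k < j then π k else π' (k - j), ?_, ?_⟩
    · refine ⟨⟨?_, ?_⟩, ⟨j, fun k hk => ?_⟩⟩
      · by_cases hj0 : 0 < j
        · simp [hj0, h0]
        · simp only [hj0, if_neg]
          have : j = 0 := by omega
          rw [this] at h0' ⊢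
          simpa [h0'] using h0
      · intro i
        by_cases hi : i < j
        · by_cases hi1 : i + 1 < j
          · simp only [if_pos hi, if_pos hi1]
            rw [hedge i]; norm_num
          · have hij : i + 1 = j := by omega
            simp only [if_pos hi, if_neg hi1]
            have : (i + 1) - j = 0 := by omega
            rw [this, h0', ← hij, hedge i]; norm_num
        · have hi1 : ¬ (i + 1 < j) := by omega
          simp only [if_neg hi, if_neg hi1]
          have : (i + 1) - j = (i - j) + 1 := by omega
          rw [this, hedge' (i - j)]; norm_num
      · have : ¬ (k < j) := by omega
        simp only [Set.mem_setOf_eq, this, if_neg, not_false_iff]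
        exact hA (k - j)
    · intro i
      by_cases hi : i < j
      · by_cases hi1 : i + 1 < j
        · simp only [if_pos hi, if_pos hi1]; exact hedge i
        · have hij : i + 1 = j := by omega
          simp only [if_pos hi, if_neg hi1]
          have h2 : (i + 1) - j = 0 := by omega
          rw [h2, h0', ← hij]; exact hedge i
      · have hi1 : ¬ (i + 1 < j) := by omega
        simp only [if_neg hi, if_neg hi1]
        have : (i + 1) - j = (i - j) + 1 := by omega
        rw [this]; exact hedge' (i - j)
  · rintro ⟨π, ⟨⟨h0, hpos⟩, j, hj⟩, hedge⟩
    refine ⟨π, ⟨⟨h0, hpos⟩, ⟨j, ?_⟩⟩, hedge⟩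
    rw [poSat_eq_one_iff P hP1]
    refine ⟨fun n => π (j + n), ⟨⟨rfl, fun i => ?_⟩, fun k => hj (j + k) (by omega)⟩,
      fun i => hedge (j + i)⟩
    have := hpos (j + i)
    exact this
end

section
/- In a finite possibilistic Kripke structure, for sets C, B ⊆ S and any state s: Po(s ⊨ C U B) = ⨆_{n ∈ ℕ} Po(s ⊨ C U^{≤n} B), and moreover Po(s ⊨ C U B) = Po(s ⊨ C U^{≤n} B) whenever n ≥ |S \ (S₌₁ ∪ S₌₀)| where S₌₁ = B and S₌₀ = S \ (C ∪ B). -/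
open scoped ENNReal

/-!
A path that reaches `B` through `C` only after more than `|C \ B|` steps visits some state of
`C \ B` twice before reaching `B`. Cutting out the loop between the two visits gives a shorter
path from the same state that still satisfies `C U B`, and whose transitions are among those of
the original path, so its possibility (the infimum of its transition possibilities) can only
grow. Hence the supremum defining `Po(s ⊨ C U B)` is already attained on paths reaching `B`
within `|C \ B|` steps.
-/

def dropSegment {S : Type*} (π : ℕ → S) (i d : ℕ) : ℕ → S :=
  fun t => if t < i then π t else π (t + d)

section PossibilisticPaths

variable {S : Type*} (P : S → S → ℝ≥0∞)

theorem poSat_mono (s : S) {φ ψ : Set (ℕ → S)} (h : φ ⊆ ψ) : PoSat P s φ ≤ PoSat P s ψ :=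
  biSup_mono fun _ hπ => ⟨hπ.1, h hπ.2⟩

theorem iInf_le_poSat {s : S} {φ : Set (ℕ → S)} {π : ℕ → S} (hπ : π ∈ PathsFrom P s)
    (hφ : π ∈ φ) : ⨅ i, P (π i) (π (i + 1)) ≤ PoSat P s φ :=
  le_biSup (fun ρ : ℕ → S => ⨅ i, P (ρ i) (ρ (i + 1))) ⟨hπ, hφ⟩

variable {P}

theorem exists_step_eq_dropSegment {π : ℕ → S} {i d : ℕ} (hloop : π i = π (i + d)) (t : ℕ) :
    ∃ t', dropSegment π i d t = π t' ∧ dropSegment π i d (t + 1) = π (t' + 1) := by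
  unfold dropSegment
  rcases lt_or_ge t i with ht | ht
  · refine ⟨t, if_pos ht, ?_⟩
    by_cases ht1 : t + 1 < i
    · exact if_pos ht1
    · rw [if_neg ht1, show t + 1 = i by omega, hloop]
  · refine ⟨t + d, if_neg (not_lt.2 ht), ?_⟩
    rw [if_neg (by omega), Nat.add_right_comm]

theorem dropSegment_mem_pathsFrom {s : S} {π : ℕ → S} {i d : ℕ} (hπ : π ∈ PathsFrom P s)
    (hloop : π i = π (i + d)) : dropSegment π i d ∈ PathsFrom P s := by
  refine ⟨?_, fun t => ?_⟩
  · rcases Nat.eq_zero_or_pos i with rfl | hi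
    · rw [dropSegment, if_neg (lt_irrefl 0), ← hloop]
      exact hπ.1
    · simpa [dropSegment, hi] using hπ.1
  · obtain ⟨t', h, h1⟩ := exists_step_eq_dropSegment hloop t
    rw [h, h1]
    exact hπ.2 t'

theorem iInf_le_iInf_dropSegment {π : ℕ → S} {i d : ℕ} (hloop : π i = π (i + d)) :
    ⨅ t, P (π t) (π (t + 1)) ≤
      ⨅ t, P (dropSegment π i d t) (dropSegment π i d (t + 1)) :=
  le_iInf fun t => by
    obtain ⟨t', h, h1⟩ := exists_step_eq_dropSegment hloop t
    rw [h, h1]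
    exact iInf_le _ t'

theorem dropSegment_until {C B : Set S} {π : ℕ → S} {i d k : ℕ} (hik : i + d ≤ k)
    (hB : π k ∈ B) (hC : ∀ t < k, π t ∈ C) :
    dropSegment π i d (k - d) ∈ B ∧ ∀ t < k - d, dropSegment π i d t ∈ C := by
  refine ⟨?_, fun t ht => ?_⟩
  · rwa [dropSegment, if_neg (by omega), Nat.sub_add_cancel (by omega)]
  · unfold dropSegment
    split_ifs
    exacts [hC t (by omega), hC (t + d) (by omega)]

end PossibilisticPaths

theorem exists_lt_lt_eq_of_ncard_lt {S : Type*} {T : Set S} (hT : T.Finite) {π : ℕ → S}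
    {k : ℕ} (hk : T.ncard < k) (hπ : ∀ i < k, π i ∈ T) :
    ∃ i j, i < j ∧ j < k ∧ π i = π j := by
  obtain ⟨a, ha, b, hb, hab, heq⟩ :=
    Finset.exists_ne_map_eq_of_card_lt_of_maps_to (s := Finset.range k) (t := hT.toFinset)
      (by rwa [Finset.card_range, ← Set.ncard_eq_toFinset_card T hT])
      (fun i hi => hT.mem_toFinset.2 (hπ i (Finset.mem_range.1 hi)))
  rw [Finset.mem_range] at ha hb
  rcases lt_or_gt_of_ne hab with h | h
  exacts [⟨a, b, h, hb, heq⟩, ⟨b, a, h, ha, heq.symm⟩]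

theorem exists_short_until_path {S : Type*} {P : S → S → ℝ≥0∞} {s : S} {C B : Set S}
    (hCB : (C \ B).Finite) (k : ℕ) {π : ℕ → S} (hπ : π ∈ PathsFrom P s) (hB : π k ∈ B)
    (hC : ∀ i < k, π i ∈ C) :
    ∃ π' ∈ PathsFrom P s, (∃ k' ≤ (C \ B).ncard, π' k' ∈ B ∧ ∀ i < k', π' i ∈ C) ∧
      ⨅ i, P (π i) (π (i + 1)) ≤ ⨅ i, P (π' i) (π' (i + 1)) := by
  induction k using Nat.strong_induction_on generalizing π with
  | _ k ih =>
  by_cases hk : k ≤ (C \ B).ncard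
  · exact ⟨π, hπ, ⟨k, hk, hB, hC⟩, le_rfl⟩
  by_cases hearlier : ∃ j < k, π j ∈ B
  · obtain ⟨j, hj, hjB⟩ := hearlier
    exact ih j hj hπ hjB fun i hi => hC i (hi.trans hj)
  push Not at hk hearlier
  obtain ⟨i, j, hij, hjk, hloop⟩ :=
    exists_lt_lt_eq_of_ncard_lt hCB hk fun i hi => ⟨hC i hi, hearlier i hi⟩
  have hloop' : π i = π (i + (j - i)) := by rwa [Nat.add_sub_cancel' hij.le]
  obtain ⟨hB', hC'⟩ := dropSegment_until (i := i) (d := j - i) (by omega) hB hC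
  obtain ⟨π', hπ', huntil, hle⟩ :=
    ih (k - (j - i)) (by omega) (dropSegment_mem_pathsFrom hπ hloop') hB' hC'
  exact ⟨π', hπ', huntil, (iInf_le_iInf_dropSegment hloop').trans hle⟩

theorem poSat_until_eq_poSat_boundedUntil {S : Type*} (P : S → S → ℝ≥0∞) (s : S)
    {C B : Set S} (hCB : (C \ B).Finite) {n : ℕ} (hn : (C \ B).ncard ≤ n) :
    PoSat P s {π | ∃ k, π k ∈ B ∧ ∀ i < k, π i ∈ C} =
      PoSat P s {π | ∃ k ≤ n, π k ∈ B ∧ ∀ i < k, π i ∈ C} := by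
  refine le_antisymm (iSup₂_le fun π ⟨hπ, k, hB, hC⟩ => ?_)
    (poSat_mono P s fun π ⟨k, _, hB, hC⟩ => ⟨k, hB, hC⟩)
  obtain ⟨π', hπ', ⟨k', hk', hB', hC'⟩, hle⟩ := exists_short_until_path hCB k hπ hB hC
  exact hle.trans (iInf_le_poSat P hπ' ⟨k', hk'.trans hn, hB', hC'⟩)

theorem stmt14_general {S : Type*} [Fintype S] (P : S → S → ℝ≥0∞)
    (s : S) (C B : Set S) :
    PoSat P s {π | ∃ k, π k ∈ B ∧ ∀ i < k, π i ∈ C} =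
        (⨆ n : ℕ, PoSat P s {π | ∃ k ≤ n, π k ∈ B ∧ ∀ i < k, π i ∈ C}) ∧
      ∀ n : ℕ, (Set.univ \ (B ∪ (Set.univ \ (C ∪ B)))).ncard ≤ n →
        PoSat P s {π | ∃ k, π k ∈ B ∧ ∀ i < k, π i ∈ C} =
          PoSat P s {π | ∃ k ≤ n, π k ∈ B ∧ ∀ i < k, π i ∈ C} := by
  have hCB : Set.univ \ (B ∪ (Set.univ \ (C ∪ B))) = C \ B := by
    ext; simp only [Set.mem_sdiff, Set.mem_union, Set.mem_univ, true_and]; tauto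
  have hbound := fun n => poSat_until_eq_poSat_boundedUntil P s (C \ B).toFinite (n := n)
  refine ⟨le_antisymm ?_ ?_, fun n hn => hbound n (hCB ▸ hn)⟩
  · rw [hbound _ le_rfl]
    exact le_iSup (fun n => PoSat P s {π | ∃ k ≤ n, π k ∈ B ∧ ∀ i < k, π i ∈ C}) _
  · exact iSup_le fun n => poSat_mono P s fun π ⟨k, _, hB, hC⟩ => ⟨k, hB, hC⟩

/-- in a finite possibilistic Kripke structure,
`Po(s ⊨ C U B) = ⨆_n Po(s ⊨ C U^{≤n} B)`, and moreover
`Po(s ⊨ C U B) = Po(s ⊨ C U^{≤n} B)` whenever `n ≥ |S \ (S₌₁ ∪ S₌₀)|`,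
where `S₌₁ = B` and `S₌₀ = S \ (C ∪ B)` (so `S \ (S₌₁ ∪ S₌₀) = C \ B`). -/
theorem stmt14 {S : Type*} [Fintype S] (P : S → S → ℝ≥0∞)
    (hP1 : ∀ s t, P s t ≤ 1) (hPn : ∀ s, (⨆ t, P s t) = 1)
    (s : S) (C B : Set S) :
    PoSat P s {π | ∃ k, π k ∈ B ∧ ∀ i < k, π i ∈ C} =
        (⨆ n : ℕ, PoSat P s {π | ∃ k ≤ n, π k ∈ B ∧ ∀ i < k, π i ∈ C}) ∧
      ∀ n : ℕ, (Set.univ \ (B ∪ (Set.univ \ (C ∪ B)))).ncard ≤ n →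
        PoSat P s {π | ∃ k, π k ∈ B ∧ ∀ i < k, π i ∈ C} =
          PoSat P s {π | ∃ k ≤ n, π k ∈ B ∧ ∀ i < k, π i ∈ C} :=
  stmt14_general P s C B
end

section
/- There exist two finite possibilistic Kripke structures M₁ and M₂ with the same state set, same labeling, and identical underlying transition graphs (i.e., P₁(s,t) > 0 iff P₂(s,t) > 0 and I₁(s) > 0 iff I₂(s) > 0 for all s,t), and a state s₀, such that Po^{M₁}(s₀ ⊨ ◇a) = 1 while Po^{M₂}(s₀ ⊨ ◇a) < 1. Consequently the satisfaction set of the PoCTL formula Po_{=1}(◇a) is not determined by the underlying qualitative transition system. -/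
open scoped ENNReal

/-- there exist two finite possibilistic Kripke structures with the same
state set and labeling and the same underlying transition graph, and a state `s₀`,
such that `Po^{M₁}(s₀ ⊨ ◇a) = 1` while `Po^{M₂}(s₀ ⊨ ◇a) < 1`.  Hence the satisfaction
set of `Po_{=1}(◇a)` is not determined by the underlying qualitative transition system. -/
theorem stmt15 :
    ∃ (S : Type) (_ : Fintype S) (P₁ P₂ : S → S → ℝ≥0∞) (I₁ I₂ : S → ℝ≥0∞) (A : Set S)
      (s₀ : S),
      (∀ s t, P₁ s t ≤ 1) ∧ (∀ s, (⨆ t, P₁ s t) = 1) ∧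
      (∀ s t, P₂ s t ≤ 1) ∧ (∀ s, (⨆ t, P₂ s t) = 1) ∧
      (∀ s, I₁ s ≤ 1) ∧ (⨆ s, I₁ s) = 1 ∧
      (∀ s, I₂ s ≤ 1) ∧ (⨆ s, I₂ s) = 1 ∧
      (∀ s t, 0 < P₁ s t ↔ 0 < P₂ s t) ∧ (∀ s, 0 < I₁ s ↔ 0 < I₂ s) ∧
      PoSat P₁ s₀ {π | ∃ k, π k ∈ A} = 1 ∧
      PoSat P₂ s₀ {π | ∃ k, π k ∈ A} < 1 := by
  refine ⟨Bool, inferInstance, (fun _ _ => 1),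
    (fun s t => if s = false ∧ t = true then (1/2 : ℝ≥0∞) else 1),
    (fun _ => 1), (fun _ => 1), {true}, false, ?_, ?_, ?_, ?_, ?_, ?_, ?_, ?_, ?_, ?_, ?_, ?_⟩
  · intro s t; exact le_rfl
  · intro s; simp
  · intro s t
    dsimp only
    split
    · exact ENNReal.half_le_self
    · exact le_rfl
  · intro s
    apply le_antisymm
    · exact iSup_le fun t => by dsimp only; split <;> simp [ENNReal.half_le_self]
    · calc (1 : ℝ≥0∞) = if s = false ∧ (false : Bool) = true then (1/2 : ℝ≥0∞) else 1 := by
            simp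
        _ ≤ _ := le_iSup (fun t => if s = false ∧ t = true then (1/2 : ℝ≥0∞) else 1) false
  · intro s; exact le_rfl
  · simp
  · intro s; exact le_rfl
  · simp
  · intro s t
    constructor
    · intro _
      dsimp only
      split
      · simp
      · simp
    · intro _; simp
  · intro s; simp
  · -- PoSat P₁ = 1
    apply le_antisymm
    · refine iSup_le fun π => iSup_le fun _ => ?_
      exact le_trans (iInf_le _ 0) le_rfl
    · have hmem : (fun n => decide (0 < n)) ∈
          PathsFrom (fun (_ _ : Bool) => (1:ℝ≥0∞)) false ∩ {π | ∃ k, π k ∈ ({true} : Set Bool)} := by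
        refine ⟨⟨by simp, fun i => by simp⟩, ⟨1, by simp⟩⟩
      calc (1 : ℝ≥0∞) = ⨅ i : ℕ, (1 : ℝ≥0∞) := by simp
        _ ≤ _ := le_iSup₂ (f := fun π (_ : π ∈ _) => ⨅ i, (fun (_ _ : Bool) => (1:ℝ≥0∞)) (π i) (π (i+1))) _ hmem
  · -- PoSat P₂ < 1
    apply lt_of_le_of_lt (b := (1/2 : ℝ≥0∞))
    · refine iSup_le fun π => iSup_le fun hπ => ?_
      obtain ⟨⟨h0, _⟩, ⟨k, hk⟩⟩ := hπ
      simp only [Set.mem_singleton_iff] at hk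
      have hex : ∃ k, π k = true := ⟨k, hk⟩
      set m := Nat.find hex with hm
      have hmt : π m = true := Nat.find_spec hex
      have hm0 : m ≠ 0 := by
        intro h
        rw [h] at hmt; rw [h0] at hmt; exact Bool.false_ne_true hmt
      obtain ⟨j, hj⟩ := Nat.exists_eq_succ_of_ne_zero hm0
      have hjf : π j = false := by
        have := Nat.find_min hex (m := j) (by omega)
        simpa using this
      have hjt : π (j + 1) = true := by rw [← Nat.succ_eq_add_one, ← hj]; exact hmt
      refine le_trans (iInf_le _ j) ?_
      rw [hjf, hjt]
      simp
    · rw [ENNReal.div_lt_iff] <;> simp [ENNReal.one_lt_two]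
end

section
/- There exists an infinite (countable-state) possibilistic Kripke structure M, a state s₀, and an atomic proposition a such that Po(s₀ ⊨ □¬a) = 0 but not every path from s₀ satisfies ◇a: take states s₀, s₁, s₂, … and t, with values P(sₖ, sₖ₊₁) chosen so that ⨅ over the infinite path s₀s₁s₂⋯ equals 0, P(sₖ, t) = 1, P(t,t) = 1, and a holding only at t; then the path s₀s₁s₂⋯ avoids a but has possibility 0. -/
open scoped ENNReal

/-- the transition possibility function of the counterexample. -/
noncomputable def myP : Option ℕ → Option ℕ → ℝ≥0∞
  | some k, some j => if j = k + 1 then ((k : ℝ≥0∞) + 2)⁻¹ else 0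
  | some _, none => 1
  | none, none => 1
  | none, some _ => 0

lemma inv_add_two_pos (k : ℕ) : (0 : ℝ≥0∞) < ((k : ℝ≥0∞) + 2)⁻¹ := by
  exact ENNReal.inv_pos.mpr (ENNReal.add_ne_top.mpr ⟨ENNReal.natCast_ne_top k, by norm_num⟩)

lemma iInf_inv_add_two : ⨅ i : ℕ, ((i : ℝ≥0∞) + 2)⁻¹ = 0 := by
  by_contra h
  have hpos : 0 < ⨅ i : ℕ, ((i : ℝ≥0∞) + 2)⁻¹ := pos_iff_ne_zero.mpr h
  obtain ⟨n, hn⟩ := ENNReal.exists_inv_nat_lt (ne_of_gt hpos)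
  have h1 : (⨅ i : ℕ, ((i : ℝ≥0∞) + 2)⁻¹) ≤ ((n : ℝ≥0∞) + 2)⁻¹ := iInf_le _ n
  have h2 : ((n : ℝ≥0∞) + 2)⁻¹ ≤ ((n : ℝ≥0∞))⁻¹ :=
    ENNReal.inv_le_inv.mpr (le_add_of_nonneg_right (by norm_num))
  exact absurd (hn.trans_le (h1.trans h2)) (lt_irrefl _)

/-- there exists an infinite countable-state possibilistic Kripke
structure, a state `s₀` and a set `A` of `a`-states such that `Po(s₀ ⊨ □¬a) = 0`
but not every path from `s₀` satisfies `◇a`.  So `∀◇a ≡ Po_{=0}(□¬a)` fails for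
infinite-state structures. -/
theorem stmt17 :
    ∃ (S : Type) (P : S → S → ℝ≥0∞) (A : Set S) (s₀ : S),
      Countable S ∧ Infinite S ∧
      (∀ s t, P s t ≤ 1) ∧ (∀ s, (⨆ t, P s t) = 1) ∧
      PoSat P s₀ {π | ∀ j, π j ∉ A} = 0 ∧
      ¬ (∀ π ∈ PathsFrom P s₀, ∃ j, π j ∈ A) := by
  refine ⟨Option ℕ, myP, {none}, some 0, inferInstance, inferInstance, ?_, ?_, ?_, ?_⟩
  · rintro (_ | s) (_ | t) <;> simp only [myP] <;> try norm_num
    split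
    · exact ENNReal.inv_le_one.mpr (by
        have : (1 : ℝ≥0∞) ≤ 2 := by norm_num
        exact this.trans (le_add_of_nonneg_left zero_le))
    · exact zero_le_one
  · rintro (_ | s)
    · apply le_antisymm
      · exact iSup_le fun t => by rcases t with _ | t <;> simp [myP]
      · exact le_iSup_of_le none (by simp [myP])
    · apply le_antisymm
      · refine iSup_le fun t => ?_
        rcases t with _ | t
        · simp [myP]
        · simp only [myP]
          split
          · exact ENNReal.inv_le_one.mpr (by
              have : (1 : ℝ≥0∞) ≤ 2 := by norm_num
              exact this.trans (le_add_of_nonneg_left zero_le))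
          · exact zero_le_one
      · exact le_iSup_of_le none (by simp [myP])
  · -- PoSat = 0
    unfold PoSat
    refine le_antisymm (iSup_le fun π => iSup_le fun hπ => ?_) zero_le
    obtain ⟨⟨h0, hpos⟩, havoid⟩ := hπ
    -- π i = some i for all i
    have hform : ∀ i, π i = some i := by
      intro i
      induction i with
      | zero => exact h0
      | succ n ih =>
        have h := hpos n
        rw [ih] at h
        have hne : π (n + 1) ≠ none := havoid (n + 1)
        obtain ⟨m, hm⟩ := Option.ne_none_iff_exists'.mp hne
        rw [hm] at h ⊢
        simp only [myP] at h
        by_cases hcase : m = n + 1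
        · rw [hcase]
        · simp [hcase] at h
    have : (⨅ i, myP (π i) (π (i + 1))) = ⨅ i : ℕ, ((i : ℝ≥0∞) + 2)⁻¹ := by
      congr 1
      funext i
      rw [hform i, hform (i + 1)]
      simp [myP]
    rw [this, iInf_inv_add_two]
  · -- the path i ↦ some i avoids A
    push_neg
    refine ⟨fun i => some i, ⟨rfl, fun i => ?_⟩, fun j => by simp⟩
    simp only [myP, if_pos rfl]
    exact inv_add_two_pos i
end

section
/- Let M be a finite possibilistic Kripke structure, s a state, Φ a set of states, and α ∈ (0,1]. There is an infinite sequence π with π 0 = s, P(π i, π(i+1)) ≥ α and π i ∈ Φ for all i, if and only if Po(s ⊨ □Φ) ≥ α, where Po(s ⊨ □Φ) = ⨆{⨅_i P(π i,π(i+1)) : π 0 = s, ∀i π i ∈ Φ}. -/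
open scoped ENNReal

/-- in a finite possibilistic Kripke structure, for `α ∈ (0,1]` and a set
`Φ` of states, there is an infinite path from `s` in the `α`-cut transition system
(edges `s→t` with `P s t ≥ α`) that always stays in `Φ` iff `Po(s ⊨ □Φ) ≥ α`, where
`Po(s ⊨ □Φ) = ⨆ {⨅ᵢ P (π i) (π (i+1)) : π 0 = s, ∀ i, π i ∈ Φ}`. -/
theorem stmt18 {S : Type*} [Fintype S] (P : S → S → ℝ≥0∞)
    (hP1 : ∀ s t, P s t ≤ 1)
    (s : S) (Φ : Set S) (α : ℝ≥0∞) (hα0 : 0 < α) (hα1 : α ≤ 1) :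
    (∃ π : ℕ → S, π 0 = s ∧ (∀ i, α ≤ P (π i) (π (i + 1))) ∧ ∀ i, π i ∈ Φ) ↔
      α ≤ ⨆ π ∈ {π : ℕ → S | π 0 = s ∧ ∀ i, π i ∈ Φ}, ⨅ i, P (π i) (π (i + 1)) := by
  constructor
  · rintro ⟨π, h0, hA, hΦ⟩
    calc α ≤ ⨅ i, P (π i) (π (i + 1)) := le_iInf hA
      _ ≤ _ := le_iSup₂ (f := fun π _ => ⨅ i, P (π i) (π (i+1))) π ⟨h0, hΦ⟩
  · intro h
    by_contra hc
    push_neg at hc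
    -- the finite set of transition values below α
    set T : Set ℝ≥0∞ := {v | (∃ p : S × S, P p.1 p.2 = v) ∧ v < α} with hT
    have hTfin : T.Finite := by
      apply (Set.finite_range (fun p : S × S => P p.1 p.2)).subset
      rintro v ⟨⟨p, hp⟩, -⟩
      exact ⟨p, hp⟩
    have hβ : (⨆ π ∈ {π : ℕ → S | π 0 = s ∧ ∀ i, π i ∈ Φ},
        ⨅ i, P (π i) (π (i + 1))) ≤ sSup T := by
      refine iSup₂_le fun π hπ => ?_
      obtain ⟨h0, hΦ⟩ := hπ
      have : ¬ ∀ i, α ≤ P (π i) (π (i + 1)) := fun hall =>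
        (hc π h0 hall).elim fun i hi => hi (hΦ i)
      obtain ⟨i, hi⟩ := not_forall.mp this
      exact (iInf_le _ i).trans
        (le_sSup ⟨⟨(π i, π (i + 1)), rfl⟩, lt_of_not_ge hi⟩)
    have hαT : α ≤ sSup T := h.trans hβ
    rcases T.eq_empty_or_nonempty with hTe | hTne
    · rw [hTe, sSup_empty] at hαT
      exact absurd hαT (by simpa using hα0.ne')
    · have := hTne.csSup_mem hTfin
      exact absurd hαT (not_le.mpr this.2)
end
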